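/- arXiv:0910.0130 — 4 statements merged into one kernel-verified Lean document; each statement's English description precedes it below -/
import Mathlib

section
/- Let 𝔛 be a countable set, P a probability measure on {0,1}^𝔛 with correlation function ρ(X') = P{X : X' ⊆ X} for finite X' ⊂ 𝔛, and f: 𝔛 → ℝ with Σ_{X' finite ⊂ 𝔛} ρ(X') ∏_{x∈X'} |f(x)| < ∞. Then the multiplicative functional Φ_f(X) = ∏_{x∈X}(1+f(x)) is defined P-almost everywhere, is absolutely integrable with respect to P, and its expectation equals E_P(Φ_f) = Σ_{X' finite ⊂ 𝔛} ρ(X') ∏_{x∈X'} f(x). -/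
/-!
Expanding the product over the configuration `ω`,
`Φ_f(ω) = ∑_{s finite} 1{s ⊆ ω} ∏_{x ∈ s} f x`. Since
`∫ |1{s ⊆ ω} ∏_{x ∈ s} f x| dP = ρ(s) ∏_{x ∈ s} |f x|`, the hypothesis says that this series of
functions has summable `L¹` norms. Hence it converges absolutely almost everywhere, its sum `Φ_f`
is integrable, and it may be integrated term by term.
-/

open MeasureTheory Finset

section FinsetSubtype

variable {ι M : Type*} [AddCommMonoid M] [TopologicalSpace M] {p : ι → Prop}

theorem hasSum_indicator_setOf_forall_iff {F : Finset ι → M} {a : M} :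
    HasSum ({s : Finset ι | ∀ i ∈ s, p i}.indicator F) a ↔
      HasSum (fun t : Finset (Subtype p) => F (t.map (.subtype p))) a := by
  classical
  have hsupp : ∀ s ∉ Set.range (map (.subtype p)),
      {s : Finset ι | ∀ i ∈ s, p i}.indicator F s = 0 := fun s hs =>
    Set.indicator_of_notMem
      (fun (hps : ∀ i ∈ s, p i) => hs ⟨s.subtype p, subtype_map_of_mem hps⟩) _
  rw [← (map_injective _).hasSum_iff hsupp]
  congr! with t
  exact Set.indicator_of_mem (fun i hi => by obtain ⟨j, -, rfl⟩ := mem_map.1 hi; exact j.2) _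

theorem summable_indicator_setOf_forall_iff {F : Finset ι → M} :
    Summable ({s : Finset ι | ∀ i ∈ s, p i}.indicator F) ↔
      Summable (fun t : Finset (Subtype p) => F (t.map (.subtype p))) :=
  exists_congr fun _ => hasSum_indicator_setOf_forall_iff

end FinsetSubtype

section ProdOneAdd

variable {ι R : Type*} [NormedCommRing R] {g : ι → R}

theorem hasSum_prod_tprod_one_add [CompleteSpace R]
    (hg : Summable fun s : Finset ι => ‖∏ i ∈ s, g i‖) :
    HasSum (∏ i ∈ ·, g i) (∏' i, (1 + g i)) := by
  rw [tprod_one_add hg.of_norm]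
  exact hg.of_norm.hasSum

theorem summable_norm_of_summable_norm_prod (hg : Summable fun s : Finset ι => ‖∏ i ∈ s, g i‖) :
    Summable fun i => ‖g i‖ := by
  simpa [Function.comp_def] using hg.comp_injective singleton_injective

variable {p : ι → Prop}

theorem summable_norm_prod_subtype_of_indicator
    (hg : Summable fun s => ‖{s : Finset ι | ∀ i ∈ s, p i}.indicator (∏ i ∈ ·, g i) s‖) :
    Summable fun t : Finset (Subtype p) => ‖∏ i ∈ t, g i‖ := by
  simp_rw [norm_indicator_eq_indicator_norm] at hg
  simpa using summable_indicator_setOf_forall_iff.1 hg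

theorem hasSum_indicator_prod_tprod_one_add [CompleteSpace R]
    (hg : Summable fun s => ‖{s : Finset ι | ∀ i ∈ s, p i}.indicator (∏ i ∈ ·, g i) s‖) :
    HasSum ({s : Finset ι | ∀ i ∈ s, p i}.indicator (∏ i ∈ ·, g i))
      (∏' i : Subtype p, (1 + g i)) := by
  rw [hasSum_indicator_setOf_forall_iff]
  simpa using hasSum_prod_tprod_one_add (summable_norm_prod_subtype_of_indicator hg)

end ProdOneAdd

theorem MeasureTheory.integrable_tsum_of_tsum_lintegral_enorm_ne_top {α E ι : Type*}
    [MeasurableSpace α] {μ : Measure α} [NormedAddCommGroup E] [CompleteSpace E]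
    [SecondCountableTopology E] [MeasurableSpace E] [BorelSpace E] [Countable ι]
    {F : ι → α → E} (hF : ∀ i, AEMeasurable (F i) μ)
    (h : ∑' i, ∫⁻ a, ‖F i a‖ₑ ∂μ ≠ ⊤) :
    Integrable (fun a => ∑' i, F i a) μ := by
  refine ⟨(AEMeasurable.tsum hF).aestronglyMeasurable, ?_⟩
  calc ∫⁻ a, ‖∑' i, F i a‖ₑ ∂μ ≤ ∫⁻ a, ∑' i, ‖F i a‖ₑ ∂μ :=
        lintegral_mono fun _ => enorm_tsum_le_tsum_enorm
    _ = ∑' i, ∫⁻ a, ‖F i a‖ₑ ∂μ := lintegral_tsum fun i => (hF i).enorm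
    _ < ⊤ := h.lt_top

theorem measurableSet_setOf_forall_mem_eq_true {ι : Type*} (s : Finset ι) :
    MeasurableSet {ω : ι → Bool | ∀ i ∈ s, ω i = true} := by
  simp only [Set.ofPred_forall]
  exact s.measurableSet_biInter fun i _ =>
    measurableSet_eq_fun (measurable_pi_apply i) measurable_const

theorem expectation_multiplicative_functional_general
    {𝔛 : Type*} [Countable 𝔛]
    (P : Measure (𝔛 → Bool)) (f : 𝔛 → ℝ)
    (h : ∑' s : Finset 𝔛,
        P {ω | ∀ x ∈ s, ω x = true} * ∏ x ∈ s, ENNReal.ofReal |f x| ≠ ⊤) :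
    (∀ᵐ ω ∂P, Summable (fun x : {x : 𝔛 // ω x = true} => |f x.1|)) ∧
    Integrable (fun ω => ∏' x : {x : 𝔛 // ω x = true}, ((1 : ℝ) + f x.1)) P ∧
    ∫ ω, (∏' x : {x : 𝔛 // ω x = true}, ((1 : ℝ) + f x.1)) ∂P =
      ∑' s : Finset 𝔛, (P {ω | ∀ x ∈ s, ω x = true}).toReal * ∏ x ∈ s, f x := by
  set g := fun (s : Finset 𝔛) =>
    {ω : 𝔛 → Bool | ∀ x ∈ s, ω x = true}.indicator fun _ => ∏ x ∈ s, f x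
  have hg_meas s : Measurable (g s) :=
    measurable_const.indicator (measurableSet_setOf_forall_mem_eq_true s)
  have hg_lintegral : ∑' s, ∫⁻ ω, ‖g s ω‖ₑ ∂P ≠ ⊤ := by
    refine ne_of_eq_of_ne (tsum_congr fun s => ?_) h
    rw [mul_comm, ← lintegral_indicator_const (measurableSet_setOf_forall_mem_eq_true s)]
    simp only [g, enorm_indicator_eq_indicator_enorm, Real.enorm_eq_ofReal_abs, abs_prod,
      ENNReal.ofReal_prod_of_nonneg fun _ _ => abs_nonneg _]
  have hg_summable : ∀ᵐ ω ∂P, Summable fun s => ‖g s ω‖ :=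
    summable_norm_of_tsum_eLpNorm_ne_top le_rfl (fun s => (hg_meas s).aestronglyMeasurable)
      (by simpa only [eLpNorm_one_eq_lintegral_enorm] using hg_lintegral)
  -- `g s ω` is, by definition, the indicator of `{s | ∀ x ∈ s, ω x = true}` evaluated at `s`.
  have hg_hasSum : ∀ᵐ ω ∂P, HasSum (g · ω) (∏' x : {x : 𝔛 // ω x = true}, (1 + f x.1)) :=
    hg_summable.mono fun ω hω => hasSum_indicator_prod_tprod_one_add hω
  have hΦ : (fun ω => ∏' x : {x : 𝔛 // ω x = true}, (1 + f x.1)) =ᵐ[P] fun ω => ∑' s, g s ω :=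
    hg_hasSum.mono fun ω hω => hω.tsum_eq.symm
  refine ⟨hg_summable.mono fun ω hω => ?_, ?_, ?_⟩
  · exact summable_norm_of_summable_norm_prod (summable_norm_prod_subtype_of_indicator hω)
  · exact (integrable_tsum_of_tsum_lintegral_enorm_ne_top (fun s => (hg_meas s).aemeasurable)
      hg_lintegral).congr hΦ.symm
  · rw [integral_congr_ae hΦ,
      integral_tsum (fun s => (hg_meas s).aestronglyMeasurable) hg_lintegral]
    refine tsum_congr fun s => ?_
    rw [integral_indicator_const _ (measurableSet_setOf_forall_mem_eq_true s), smul_eq_mul,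
      measureReal_def]

/-- If `Σ_{X' finite} ρ(X') ∏_{x∈X'} |f(x)| < ∞`, where `ρ(X') = P{X : X' ⊆ X}` are the
correlation functions of a probability measure `P` on `{0,1}^𝔛`, then the multiplicative
functional `Φ_f(X) = ∏_{x∈X}(1+f(x))` is defined `P`-a.e., absolutely integrable, and
`E_P(Φ_f) = Σ_{X' finite} ρ(X') ∏_{x∈X'} f(x)`. -/
theorem expectation_multiplicative_functional
    {𝔛 : Type*} [Countable 𝔛]
    (P : Measure (𝔛 → Bool)) [IsProbabilityMeasure P] (f : 𝔛 → ℝ)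
    (h : ∑' s : Finset 𝔛,
        P {ω | ∀ x ∈ s, ω x = true} * ∏ x ∈ s, ENNReal.ofReal |f x| ≠ ⊤) :
    (∀ᵐ ω ∂P, Summable (fun x : {x : 𝔛 // ω x = true} => |f x.1|)) ∧
    Integrable (fun ω => ∏' x : {x : 𝔛 // ω x = true}, ((1 : ℝ) + f x.1)) P ∧
    ∫ ω, (∏' x : {x : 𝔛 // ω x = true}, ((1 : ℝ) + f x.1)) ∂P =
      ∑' s : Finset 𝔛, (P {ω | ∀ x ∈ s, ω x = true}).toReal * ∏ x ∈ s, f x :=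
  expectation_multiplicative_functional_general P f h
end

section
/- Let μ ∈ (−1, 1), ρ > 0, and C > 0. Then the double integral ∬_{u_1 ≥ C, u_2 ≥ C, |u_1 − u_2| ≥ ρ} u_1^{μ−1} u_2^{−μ−1} / |u_1 − u_2| du_1 du_2 is finite. -/
/-!
Swapping the coordinates and replacing `μ` by `-μ` maps the part of the region below the diagonal
onto the part above it. Above the diagonal write `u₁ = x`, `u₂ = x + t` (a measure-preserving
shear); then `x, t` range over `[C, ∞) × [ρ, ∞)`, and splitting
`(x + t) ^ (-μ - 1) ≤ x ^ (-(1 + μ) / 2) * t ^ (-(1 + μ) / 2)` bounds the integrand by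
`x ^ ((μ - 3) / 2) * t ^ (-(μ + 3) / 2)`, whose exponents are both `< -1` exactly when `-1 < μ < 1`.
-/

open MeasureTheory Set Real

theorem add_rpow_neg_add_le {x t a b : ℝ} (hx : 0 < x) (ht : 0 < t) (ha : 0 ≤ a) (hb : 0 ≤ b) :
    (x + t) ^ (-(a + b)) ≤ x ^ (-a) * t ^ (-b) := by
  rw [neg_add, rpow_add (by positivity)]
  exact mul_le_mul (rpow_le_rpow_of_nonpos hx (by linarith) (by linarith))
    (rpow_le_rpow_of_nonpos ht (by linarith) (by linarith)) (by positivity) (by positivity)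

theorem rpow_mul_add_rpow_div_le {μ x t : ℝ} (hμ : -1 ≤ μ) (hx : 0 < x) (ht : 0 < t) :
    x ^ (μ - 1) * (x + t) ^ (-μ - 1) / t ≤ x ^ ((μ - 3) / 2) * t ^ (-(μ + 3) / 2) := by
  have hsplit := add_rpow_neg_add_le hx ht (a := (1 + μ) / 2) (b := (1 + μ) / 2)
    (by linarith) (by linarith)
  rw [show -((1 + μ) / 2 + (1 + μ) / 2) = -μ - 1 by ring] at hsplit
  calc x ^ (μ - 1) * (x + t) ^ (-μ - 1) / t
      ≤ x ^ (μ - 1) * (x ^ (-((1 + μ) / 2)) * t ^ (-((1 + μ) / 2))) / t := by gcongr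
    _ = x ^ (μ - 1) * x ^ (-((1 + μ) / 2)) * (t ^ (-((1 + μ) / 2)) / t) := by ring
    _ = x ^ ((μ - 3) / 2) * t ^ (-(μ + 3) / 2) := by
      rw [← rpow_add hx, ← rpow_sub_one ht.ne']
      ring_nf

theorem integrableOn_Ici_rpow_of_lt {a c : ℝ} (ha : a < -1) (hc : 0 < c) :
    IntegrableOn (fun x : ℝ => x ^ a) (Ici c) :=
  (integrableOn_Ici_iff_integrableOn_Ioi).mpr (integrableOn_Ioi_rpow_of_lt ha hc)

theorem integrableOn_Ici_prod_Ici_rpow_mul_rpow {a b c d : ℝ} (ha : a < -1) (hb : b < -1)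
    (hc : 0 < c) (hd : 0 < d) :
    IntegrableOn (fun p : ℝ × ℝ => p.1 ^ a * p.2 ^ b) (Ici c ×ˢ Ici d) := by
  rw [IntegrableOn, Measure.volume_eq_prod, ← Measure.prod_restrict]
  exact (integrableOn_Ici_rpow_of_lt ha hc).mul_prod (integrableOn_Ici_rpow_of_lt hb hd)

theorem integrableOn_rpow_mul_rpow_div_sub {μ ρ C : ℝ} (hμ : μ ∈ Ioo (-1 : ℝ) 1) (hρ : 0 < ρ)
    (hC : 0 < C) :
    IntegrableOn (fun p : ℝ × ℝ => p.1 ^ (μ - 1) * p.2 ^ (-μ - 1) / (p.2 - p.1))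
      {p : ℝ × ℝ | C ≤ p.1 ∧ p.1 + ρ ≤ p.2} := by
  set shear := MeasurableEquiv.shearAddRight ℝ
  have hshear : MeasurePreserving shear volume volume := by
    rw [Measure.volume_eq_prod]
    exact measurePreserving_prod_add _ _
  have hpre : shear ⁻¹' {p : ℝ × ℝ | C ≤ p.1 ∧ p.1 + ρ ≤ p.2} = Ici C ×ˢ Ici ρ := by
    ext ⟨x, t⟩
    simp [shear, MeasurableEquiv.shearAddRight]
  rw [← hshear.integrableOn_comp_preimage shear.measurableEmbedding, hpre]
  refine (integrableOn_Ici_prod_Ici_rpow_mul_rpow (a := (μ - 3) / 2) (b := -(μ + 3) / 2)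
    (by linarith [hμ.2]) (by linarith [hμ.1]) hC hρ).mono' ?_ ?_
  · exact ((by fun_prop : Measurable fun p : ℝ × ℝ =>
      p.1 ^ (μ - 1) * p.2 ^ (-μ - 1) / (p.2 - p.1)).comp shear.measurable).aestronglyMeasurable
  · filter_upwards [ae_restrict_mem (measurableSet_Ici.prod measurableSet_Ici)]
      with ⟨x, t⟩ ⟨hx, ht⟩
    have hx : 0 < x := hC.trans_le hx
    have ht : 0 < t := hρ.trans_le ht
    change ‖x ^ (μ - 1) * (x + t) ^ (-μ - 1) / (x + t - x)‖ ≤ _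
    rw [add_sub_cancel_left, norm_of_nonneg (by positivity)]
    exact rpow_mul_add_rpow_div_le (by linarith [hμ.1]) hx ht

/-- For `μ ∈ (−1,1)`, `ρ > 0`, `C > 0`, the double integral
`∬_{u₁,u₂ ≥ C, |u₁−u₂| ≥ ρ} u₁^{μ−1} u₂^{−μ−1} / |u₁ − u₂| du₁ du₂` is finite. -/
theorem double_integral_finite (μ ρ C : ℝ)
    (hμ : μ ∈ Set.Ioo (-1 : ℝ) 1) (hρ : 0 < ρ) (hC : 0 < C) :
    IntegrableOn (fun p : ℝ × ℝ => p.1 ^ (μ - 1) * p.2 ^ (-μ - 1) / |p.1 - p.2|)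
      {p : ℝ × ℝ | C ≤ p.1 ∧ C ≤ p.2 ∧ ρ ≤ |p.1 - p.2|} := by
  set U := {p : ℝ × ℝ | C ≤ p.1 ∧ p.1 + ρ ≤ p.2}
  have hU : MeasurableSet U := by measurability
  have hcover : {p : ℝ × ℝ | C ≤ p.1 ∧ C ≤ p.2 ∧ ρ ≤ |p.1 - p.2|} ⊆ U ∪ Prod.swap ⁻¹' U := by
    rintro ⟨x, y⟩ ⟨hx, hy, hxy⟩
    rcases le_total x y with h | h
    · exact Or.inl ⟨hx, by rw [abs_of_nonpos (by linarith)] at hxy; linarith⟩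
    · exact Or.inr (show C ≤ y ∧ y + ρ ≤ x by
        rw [abs_of_nonneg (by linarith)] at hxy; exact ⟨hy, by linarith⟩)
  have hupper : IntegrableOn
      (fun p : ℝ × ℝ => p.1 ^ (μ - 1) * p.2 ^ (-μ - 1) / |p.1 - p.2|) U :=
    (integrableOn_rpow_mul_rpow_div_sub hμ hρ hC).congr_fun
      (fun p hp => by simp only; rw [abs_of_nonpos (by linarith [hp.2])]; ring) hU
  have hlower := (Measure.measurePreserving_swap.integrableOn_comp_preimage
    MeasurableEquiv.prodComm.measurableEmbedding).mpr
    (integrableOn_rpow_mul_rpow_div_sub (μ := -μ) ⟨by linarith [hμ.2], by linarith [hμ.1]⟩ hρ hC)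
  refine (hupper.union (hlower.congr_fun (fun p hp => ?_) (hU.preimage measurable_swap))).mono_set
    hcover
  have hgap : p.2 + ρ ≤ p.1 := hp.2
  simp only [Function.comp_apply, Prod.fst_swap, Prod.snd_swap, neg_neg]
  rw [abs_of_nonneg (by linarith)]
  ring
end

section
/- Fix c ∈ (0, 1/2) and ρ ∈ (0, 1/2). For ξ ∈ (0,1) close enough to 1, set ε = 1 − ξ. The Möbius transform ω ↦ (1 − √ξ ω)/(ω − √ξ) maps the circle |ω'| = 1 − cε to a circle S intersecting the real axis at points ω_− = (c + 1/2)/(c − 1/2) + O(ε) < 0 and ω_+ = 1 + O(ε²), and ω_+ < 1/√ξ − ερ. Consequently, |(1 − √ξ ω)/(ω − √ξ)| < 1 − cε for all ω with Re ω ≥ 1/√ξ − ερ lying outside the circle S (in particular for all ω on the contour C(R, ερ, ξ) when R is large enough). -/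
open Set

/-!
Write `s = √ξ`, `ε = 1 - s²` and `a = 1 - cε`. Since `s < a`, the Möbius map sends `ω` into the
disc of radius `a` exactly when `ω` lies outside the circle `S`, and every `ω` to the right of
`ω₊ = (1 + sa)/(a + s)` does. The real points of `S` have closed forms,
`ω₊ - 1 = cε(1 - s)/(a + s)` and `ω₋ = -(1 + cs(1 + s))/(1 - c(1 + s))`, which give the
asymptotics; and `1/s - 1 > ε/2` puts `ω₊ + ερ` below `1/s` as soon as `ε + ρ ≤ 1/2`.
-/

/-- `moebiusInv s` inverts `ω ↦ (1 - sω)/(ω - s)`; the real points of `S` are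
`ω± = moebiusInv s (±a)`. -/
noncomputable def moebiusInv (s w : ℝ) : ℝ := (1 + s * w) / (w + s)

theorem norm_moebius_lt_of_moebiusInv_lt_re {s a : ℝ} (hs : 0 ≤ s) (hsa : s < a) (has : a * s < 1)
    {ω : ℂ} (hω : moebiusInv s a < ω.re) : ‖(1 - (s : ℂ) * ω) / (ω - s)‖ < a := by
  have hre : (1 + s * a) / (a + s) < ω.re := hω
  rw [div_lt_iff₀ (by linarith)] at hre
  have hx : s < ω.re := by nlinarith
  have hden : 0 < ‖ω - s‖ := norm_pos_iff.2 fun h => by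
    have := congrArg Complex.re h
    simp only [Complex.sub_re, Complex.ofReal_re, Complex.zero_re] at this
    linarith
  rw [norm_div, div_lt_iff₀ hden]
  refine lt_of_pow_lt_pow_left₀ 2 (mul_nonneg (by linarith) hden.le) ?_
  rw [mul_pow, Complex.sq_norm, Complex.sq_norm, Complex.normSq_apply, Complex.normSq_apply]
  simp only [Complex.sub_re, Complex.sub_im, Complex.mul_re, Complex.mul_im, Complex.one_re,
    Complex.one_im, Complex.ofReal_re, Complex.ofReal_im]
  -- `|1 - sω|² - a²|ω - s|²` factors on the real line as `(1 + as - (a+s)x)(1 - as + (a-s)x)`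
  have hfactor : 0 < ((a + s) * ω.re - (1 + s * a)) * ((a - s) * ω.re + (1 - a * s)) :=
    mul_pos (by linarith) (by nlinarith)
  nlinarith [mul_nonneg (by nlinarith : 0 ≤ a ^ 2 - s ^ 2) (sq_nonneg ω.im)]

section

variable {c s : ℝ}

theorem one_sub_mul_one_add_pos (hc : c < 1 / 2) (hs₀ : 0 ≤ s) (hs₁ : s < 1) :
    0 < 1 - c * (1 + s) := by
  nlinarith

theorem lt_one_sub_mul_one_sub_sq (hc : c < 1 / 2) (hs₀ : 0 ≤ s) (hs₁ : s < 1) :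
    s < 1 - c * (1 - s ^ 2) := by
  have hfactor : 1 - c * (1 - s ^ 2) - s = (1 - s) * (1 - c * (1 + s)) := by ring
  nlinarith [mul_pos (sub_pos.2 hs₁) (one_sub_mul_one_add_pos hc hs₀ hs₁)]

theorem moebiusInv_neg_one_sub_mul_one_sub_sq (hc : c < 1 / 2) (hs₀ : 0 ≤ s) (hs₁ : s < 1) :
    moebiusInv s (-(1 - c * (1 - s ^ 2))) = -(1 + c * s * (1 + s)) / (1 - c * (1 + s)) := by
  unfold moebiusInv
  rw [div_eq_div_iff (by nlinarith [lt_one_sub_mul_one_sub_sq hc hs₀ hs₁])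
    (one_sub_mul_one_add_pos hc hs₀ hs₁).ne']
  ring

theorem abs_moebiusInv_neg_sub_le (hc₀ : 0 ≤ c) (hc : c < 1 / 2) (hs₀ : 0 ≤ s) (hs₁ : s < 1) :
    |moebiusInv s (-(1 - c * (1 - s ^ 2))) - (c + 1 / 2) / (c - 1 / 2)| ≤
      4 * c / (1 - 2 * c) ^ 2 * (1 - s ^ 2) := by
  have hd := one_sub_mul_one_add_pos hc hs₀ hs₁
  have h2c : 0 < 1 - 2 * c := by linarith
  have hc_half : c - 1 / 2 ≠ 0 := by linarith
  have key : moebiusInv s (-(1 - c * (1 - s ^ 2))) - (c + 1 / 2) / (c - 1 / 2) =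
      c * (1 - s) * (3 + s - 2 * c * (1 + s)) / ((1 - 2 * c) * (1 - c * (1 + s))) := by
    rw [moebiusInv_neg_one_sub_mul_one_sub_sq hc hs₀ hs₁, div_sub_div _ _ hd.ne' hc_half,
      div_eq_div_iff (mul_ne_zero hd.ne' hc_half) (mul_ne_zero h2c.ne' hd.ne')]
    ring
  rw [key, abs_of_nonneg (div_nonneg (mul_nonneg (mul_nonneg hc₀ (by linarith)) (by nlinarith))
    (by positivity)), div_le_iff₀ (by positivity)]
  calc c * (1 - s) * (3 + s - 2 * c * (1 + s)) ≤ 4 * c * (1 - s ^ 2) := by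
        nlinarith [mul_nonneg hc₀ (sub_nonneg.2 hs₁.le), mul_nonneg hc₀ hs₀]
    _ = 4 * c / (1 - 2 * c) ^ 2 * (1 - s ^ 2) * (1 - 2 * c) ^ 2 := by
        rw [mul_right_comm (4 * c / _), div_mul_cancel₀ _ (pow_ne_zero 2 h2c.ne')]
    _ ≤ 4 * c / (1 - 2 * c) ^ 2 * (1 - s ^ 2) * ((1 - 2 * c) * (1 - c * (1 + s))) := by
        rw [sq]
        exact mul_le_mul_of_nonneg_left (mul_le_mul_of_nonneg_left (by nlinarith) h2c.le)
          (mul_nonneg (by positivity) (by nlinarith))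

theorem abs_moebiusInv_sub_one_le (hc₀ : 0 ≤ c) (hc : c ≤ 1 / 2) (hs₀ : 0 ≤ s) (hs₁ : s ≤ 1) :
    |moebiusInv s (1 - c * (1 - s ^ 2)) - 1| ≤ 2 * c * (1 - s ^ 2) ^ 2 := by
  have ha : 1 / 2 ≤ 1 - c * (1 - s ^ 2) := by nlinarith
  have key : moebiusInv s (1 - c * (1 - s ^ 2)) - 1 =
      c * (1 - s) * (1 - s ^ 2) / (1 - c * (1 - s ^ 2) + s) := by
    unfold moebiusInv
    field_simp
    ring
  rw [key, abs_of_nonneg (div_nonneg (mul_nonneg (mul_nonneg hc₀ (by linarith)) (by nlinarith))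
    (by positivity)), div_le_iff₀ (by positivity)]
  have h : 1 ≤ 2 * (1 + s) * (1 - c * (1 - s ^ 2) + s) := by nlinarith
  nlinarith [mul_le_mul_of_nonneg_left h
    (mul_nonneg (mul_nonneg hc₀ (sub_nonneg.2 hs₁)) (by nlinarith : (0 : ℝ) ≤ 1 - s ^ 2))]

theorem moebiusInv_lt_inv_sub_mul {ρ : ℝ} (hc₀ : 0 ≤ c) (hc : c ≤ 1 / 2) (hs₀ : 0 < s) (hs₁ : s < 1)
    (hρ : 1 - s ^ 2 + ρ ≤ 1 / 2) :
    moebiusInv s (1 - c * (1 - s ^ 2)) < 1 / s - (1 - s ^ 2) * ρ := by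
  have hplus := (abs_le.1 (abs_moebiusInv_sub_one_le hc₀ hc hs₀.le hs₁.le)).2
  have hinv : (1 - s ^ 2) / 2 < 1 / s - 1 := by
    rw [lt_sub_iff_add_lt, lt_div_iff₀ hs₀]
    nlinarith
  nlinarith [mul_pos (sub_pos.2 hs₁) (add_pos one_pos hs₀)]

end

/-- Fix `c ∈ (0,1/2)` and `ρ ∈ (0,1/2)`.  For `ξ` close enough to `1`, with `ε = 1−ξ`,
the Möbius transform `ω ↦ (1 − √ξ ω)/(ω − √ξ)` maps the circle `|ω'| = 1 − cε` to a
circle `S` meeting the real axis at `ω₋ = (c+1/2)/(c−1/2) + O(ε)` and `ω₊ = 1 + O(ε²)`,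
with `ω₊ < 1/√ξ − ερ`; consequently `|(1 − √ξ ω)/(ω − √ξ)| < 1 − cε` for all `ω` with
`Re ω ≥ 1/√ξ − ερ` (which lie outside `S`). -/
theorem moebius_contour_estimate (c ρ : ℝ)
    (hc : c ∈ Ioo (0 : ℝ) (1 / 2)) (hρ : ρ ∈ Ioo (0 : ℝ) (1 / 2)) :
    ∃ K₁ K₂ ξ₀ : ℝ, ξ₀ ∈ Ioo (0 : ℝ) 1 ∧
      ∀ ξ ∈ Ioo (0 : ℝ) 1, ξ₀ < ξ →
        |(1 + Real.sqrt ξ * (-(1 - c * (1 - ξ)))) / (-(1 - c * (1 - ξ)) + Real.sqrt ξ) -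
            (c + 1 / 2) / (c - 1 / 2)| ≤ K₁ * (1 - ξ) ∧
        |(1 + Real.sqrt ξ * (1 - c * (1 - ξ))) / ((1 - c * (1 - ξ)) + Real.sqrt ξ) - 1| ≤
            K₂ * (1 - ξ) ^ 2 ∧
        (1 + Real.sqrt ξ * (1 - c * (1 - ξ))) / ((1 - c * (1 - ξ)) + Real.sqrt ξ) <
            1 / Real.sqrt ξ - (1 - ξ) * ρ ∧
        ∀ ω : ℂ, 1 / Real.sqrt ξ - (1 - ξ) * ρ ≤ ω.re →
          ‖(1 - (Real.sqrt ξ : ℂ) * ω) / (ω - (Real.sqrt ξ : ℂ))‖ < 1 - c * (1 - ξ) := by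
  obtain ⟨hc₀, hc₁⟩ := hc
  refine ⟨4 * c / (1 - 2 * c) ^ 2, 2 * c, 1 / 2 + ρ, ⟨by linarith [hρ.1], by linarith [hρ.2]⟩, ?_⟩
  rintro ξ ⟨hξ₀, hξ₁⟩ hξ
  obtain ⟨s, hs₀, hs₁, rfl⟩ : ∃ s, 0 < s ∧ s < 1 ∧ ξ = s ^ 2 :=
    ⟨√ξ, Real.sqrt_pos.2 hξ₀, (Real.sqrt_lt' one_pos).2 (by simpa using hξ₁),
      (Real.sq_sqrt hξ₀.le).symm⟩
  rw [Real.sqrt_sq hs₀.le]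
  have hplus := moebiusInv_lt_inv_sub_mul (ρ := ρ) hc₀.le hc₁.le hs₀ hs₁ (by linarith)
  refine ⟨abs_moebiusInv_neg_sub_le hc₀.le hc₁ hs₀.le hs₁,
    abs_moebiusInv_sub_one_le hc₀.le hc₁.le hs₀.le hs₁.le, hplus, fun ω hω => ?_⟩
  refine norm_moebius_lt_of_moebiusInv_lt_re hs₀.le (lt_one_sub_mul_one_sub_sq hc₁ hs₀.le hs₁)
    ?_ (hplus.trans_le hω)
  nlinarith [mul_pos hc₀ (sub_pos.2 hs₁)]
end

section
/- For a point u = |u| e^{iθ} in ℂ with |u| large and θ → 0, one has |u/(1+u)| = 1 − |u|^{-1} cos θ + O(|u|^{-2}). Consequently, for any δ > 0 there is a constant C_δ such that for u_1, u_2 on the contours [+∞ − iρ, 0−, +∞ + iρ] (with |u_1|, |u_2| large), 2 + 2 log(1/(1 − |u_1 u_2/((1+u_1)(1+u_2))|)) ≤ C_δ |u_1|^{δ} |u_2|^{δ}. -/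
/-!
Writing `w = u⁻¹`, one has `‖u/(1+u)‖ = ‖1 + w‖⁻¹` and `‖1 + w‖² = 1 + 2 Re w + ‖w‖²`, which gives
the expansion with `Re w = cos θ / t`. On the contours `|Im u| ≤ Re u`, so `‖u‖ ≤ 2 Re u` and
`‖1+u‖² - ‖u‖² = 1 + 2 Re u ≥ 1 + ‖u‖`; hence `1 - ‖u/(1+u)‖ ≥ 1/(1 + 2‖u‖)`. The factor
`‖u₂/(1+u₂)‖ < 1` only helps, so the logarithm is `O(log ‖u₁‖)`, which is `O(‖u₁‖^δ)`.
-/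

namespace Complex

lemma sq_norm_one_add (w : ℂ) : ‖1 + w‖ ^ 2 = 1 + 2 * w.re + ‖w‖ ^ 2 := by
  simp only [Complex.sq_norm, normSq_apply, add_re, add_im, one_re, one_im]
  ring

lemma abs_inv_norm_one_add_sub_le {w : ℂ} (hw : ‖w‖ ≤ 1 / 2) :
    |‖1 + w‖⁻¹ - (1 - w.re)| ≤ 14 * ‖w‖ ^ 2 := by
  set s := ‖1 + w‖
  set x := w.re
  set r := ‖w‖
  have hs2 : s ^ 2 = 1 + 2 * x + r ^ 2 := sq_norm_one_add w
  have hxr : |x| ≤ r := abs_re_le_norm w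
  obtain ⟨hxl, hxu⟩ := abs_le.1 hxr
  have hr0 : 0 ≤ r := norm_nonneg w
  have hs : 1 / 2 ≤ s := by
    have := re_le_norm (1 + w)
    rw [add_re, one_re] at this
    linarith
  have hconj : 1 ≤ 1 + s * (1 - x) := by nlinarith
  -- `1 - s²(1-x)² = 3x² - 2x³ - r² + 2xr² - x²r²`, each term of size `O(r²)`
  have hprod : |(1 - s * (1 - x)) * (1 + s * (1 - x))| ≤ 7 * r ^ 2 := by
    have hx2 : x ^ 2 ≤ r ^ 2 := sq_le_sq' hxl hxu
    rw [abs_le]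
    constructor <;> nlinarith [mul_nonneg hr0 (sq_nonneg r), mul_nonneg (sq_nonneg x) hr0,
      mul_nonneg (sq_nonneg r) (sq_nonneg x), sq_nonneg r]
  have hnum : |1 - s * (1 - x)| ≤ 7 * r ^ 2 := by
    rw [abs_mul, abs_of_pos (show 0 < 1 + s * (1 - x) by linarith)] at hprod
    nlinarith [abs_nonneg (1 - s * (1 - x))]
  have hs0 : 0 < s := by linarith
  calc |s⁻¹ - (1 - x)| = |1 - s * (1 - x)| / s := by
        rw [← abs_of_pos hs0, ← abs_div, abs_of_pos hs0]
        field_simp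
    _ ≤ 7 * r ^ 2 / (1 / 2) := div_le_div₀ (by positivity) hnum (by norm_num) hs
    _ = 14 * r ^ 2 := by ring

lemma div_one_add_self_eq_inv {u : ℂ} (hu : u ≠ 0) : u / (1 + u) = (1 + u⁻¹)⁻¹ := by
  field_simp
  rw [add_comm]

lemma norm_ofReal_mul_exp_div_one_add_sub_le {t : ℝ} (ht : 2 ≤ t) (θ : ℝ) :
    |‖(t * exp (θ * I)) / (1 + t * exp (θ * I))‖ - (1 - Real.cos θ / t)| ≤ 14 / t ^ 2 := by
  set u : ℂ := t * exp (θ * I)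
  have ht0 : 0 < t := by linarith
  have hnorm_u : ‖u‖ = t := by
    rw [norm_mul, norm_exp_ofReal_mul_I, norm_real, Real.norm_of_nonneg ht0.le, mul_one]
  have hnorm : ‖u⁻¹‖ = t⁻¹ := by rw [norm_inv, hnorm_u]
  have hre : u⁻¹.re = Real.cos θ / t := by
    rw [inv_re, re_ofReal_mul, exp_ofReal_mul_I_re, normSq_eq_norm_sq, hnorm_u]
    field_simp
  have hu : u ≠ 0 := by
    rw [← norm_ne_zero_iff, hnorm_u]
    exact ht0.ne'
  rw [div_one_add_self_eq_inv hu, norm_inv, ← hre]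
  calc _ ≤ 14 * ‖u⁻¹‖ ^ 2 := abs_inv_norm_one_add_sub_le (by
          rw [hnorm]; exact inv_le_of_inv_le₀ (by norm_num) (by linarith))
    _ = 14 / t ^ 2 := by rw [hnorm, inv_pow, div_eq_mul_inv]

lemma norm_lt_norm_one_add {u : ℂ} (hu : 0 ≤ u.re) : ‖u‖ < ‖1 + u‖ := by
  refine lt_of_pow_lt_pow_left₀ 2 (norm_nonneg _) ?_
  rw [sq_norm_one_add]
  linarith

lemma norm_div_one_add_self_lt_one {u : ℂ} (hu : 0 ≤ u.re) : ‖u / (1 + u)‖ < 1 := by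
  have h := norm_lt_norm_one_add hu
  rw [norm_div, div_lt_one ((norm_nonneg u).trans_lt h)]
  exact h

lemma inv_one_sub_norm_div_one_add_self_le {u : ℂ} (hu : ‖u‖ ≤ 2 * u.re) :
    (1 - ‖u / (1 + u)‖)⁻¹ ≤ 1 + 2 * ‖u‖ := by
  have hre : 0 ≤ u.re := by linarith [norm_nonneg u]
  set a := ‖u‖
  set b := ‖1 + u‖
  have hab : a < b := norm_lt_norm_one_add hre
  have hb : b ≤ 1 + a := by simpa [b] using norm_add_le 1 u
  -- `(b - a)(b + a) = 1 + 2 Re u ≥ 1 + a ≥ b` and `b + a ≤ 1 + 2a`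
  have hsq : b ^ 2 = 1 + 2 * u.re + a ^ 2 := sq_norm_one_add u
  have hkey : b ≤ (b - a) * (1 + 2 * a) := by nlinarith
  have hb0 : 0 < b := (norm_nonneg u).trans_lt hab
  refine inv_le_of_inv_le₀ (by positivity) ?_
  rw [norm_div, inv_le_iff_one_le_mul₀ (by positivity), one_sub_div hb0.ne', div_mul_eq_mul_div,
    one_le_div hb0]
  linarith

lemma norm_mul_div_lt_one_and_inv_one_sub_le {u₁ u₂ : ℂ} (h₁ : ‖u₁‖ ≤ 2 * u₁.re)
    (h₂ : 0 ≤ u₂.re) :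
    ‖u₁ * u₂ / ((1 + u₁) * (1 + u₂))‖ < 1 ∧
      (1 - ‖u₁ * u₂ / ((1 + u₁) * (1 + u₂))‖)⁻¹ ≤ 1 + 2 * ‖u₁‖ := by
  have hre₁ : 0 ≤ u₁.re := by linarith [norm_nonneg u₁]
  have hr₁ := norm_div_one_add_self_lt_one hre₁
  have hr₂ := norm_div_one_add_self_lt_one h₂
  have hle : ‖u₁ * u₂ / ((1 + u₁) * (1 + u₂))‖ ≤ ‖u₁ / (1 + u₁)‖ := by
    rw [mul_div_mul_comm, norm_mul]
    exact mul_le_of_le_one_right (norm_nonneg _) hr₂.le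
  refine ⟨hle.trans_lt hr₁, ?_⟩
  calc (1 - ‖u₁ * u₂ / ((1 + u₁) * (1 + u₂))‖)⁻¹ ≤ (1 - ‖u₁ / (1 + u₁)‖)⁻¹ :=
        inv_anti₀ (by linarith) (by linarith)
    _ ≤ 1 + 2 * ‖u₁‖ := inv_one_sub_norm_div_one_add_self_le h₁

lemma norm_le_two_mul_re {u : ℂ} (hu : |u.im| ≤ u.re) : ‖u‖ ≤ 2 * u.re := by
  linarith [norm_le_abs_re_add_abs_im u, abs_of_nonneg ((abs_nonneg _).trans hu)]

end Complex

lemma Real.two_add_two_mul_log_le_rpow {x δ : ℝ} (hx : 1 ≤ x) (hδ : 0 < δ) :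
    2 + 2 * Real.log x ≤ (2 + 2 / δ) * x ^ δ := by
  have h1 : 1 ≤ x ^ δ := Real.one_le_rpow hx hδ.le
  have hlog : Real.log x ≤ x ^ δ / δ := Real.log_le_rpow_div (by linarith) hδ
  have : (2 + 2 / δ) * x ^ δ = 2 * x ^ δ + 2 * (x ^ δ / δ) := by ring
  linarith

theorem contour_log_estimate_general (ρ : ℝ) :
    (∃ C₀ T : ℝ, ∀ t θ : ℝ, T ≤ t →
        |‖(t * Complex.exp (θ * Complex.I)) / (1 + t * Complex.exp (θ * Complex.I))‖ -
            (1 - Real.cos θ / t)| ≤ C₀ / t ^ 2) ∧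
    ∀ δ > (0 : ℝ), ∃ Cδ T : ℝ, ∀ u₁ u₂ : ℂ,
      |u₁.im| = ρ → T ≤ u₁.re → |u₂.im| = ρ → T ≤ u₂.re →
      ‖u₁ * u₂ / ((1 + u₁) * (1 + u₂))‖ < 1 ∧
      2 + 2 * Real.log (1 / (1 - ‖u₁ * u₂ / ((1 + u₁) * (1 + u₂))‖)) ≤
        Cδ * ‖u₁‖ ^ δ * ‖u₂‖ ^ δ := by
  refine ⟨⟨14, 2, fun t θ ht => Complex.norm_ofReal_mul_exp_div_one_add_sub_le ht θ⟩, fun δ hδ => ?_⟩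
  refine ⟨(2 + 2 / δ) * 3 ^ δ, max 1 ρ, fun u₁ u₂ him₁ hre₁ _ hre₂ => ?_⟩
  have hsector₁ : ‖u₁‖ ≤ 2 * u₁.re :=
    Complex.norm_le_two_mul_re (him₁ ▸ le_of_max_le_right hre₁)
  have hone₁ : 1 ≤ ‖u₁‖ := (le_of_max_le_left hre₁).trans (Complex.re_le_norm u₁)
  have hone₂ : 1 ≤ ‖u₂‖ := (le_of_max_le_left hre₂).trans (Complex.re_le_norm u₂)
  obtain ⟨hlt, hinv⟩ := Complex.norm_mul_div_lt_one_and_inv_one_sub_le hsector₁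
    (zero_le_one.trans (le_of_max_le_left hre₂))
  refine ⟨hlt, ?_⟩
  set p := ‖u₁ * u₂ / ((1 + u₁) * (1 + u₂))‖
  calc 2 + 2 * Real.log (1 / (1 - p)) ≤ 2 + 2 * Real.log (3 * ‖u₁‖) := by
        have : 0 < 1 - p := sub_pos.2 hlt
        gcongr
        rw [one_div]
        linarith
    _ ≤ (2 + 2 / δ) * (3 * ‖u₁‖) ^ δ := Real.two_add_two_mul_log_le_rpow (by linarith) hδ
    _ = (2 + 2 / δ) * 3 ^ δ * ‖u₁‖ ^ δ := by
        rw [Real.mul_rpow (by norm_num) (by positivity), mul_assoc]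
    _ ≤ (2 + 2 / δ) * 3 ^ δ * ‖u₁‖ ^ δ * ‖u₂‖ ^ δ :=
        le_mul_of_one_le_right (by positivity) (Real.one_le_rpow hone₂ hδ.le)

/-- For `u = t e^{iθ}` with `t = |u|` large, `|u/(1+u)| = 1 − t⁻¹ cos θ + O(t⁻²)`
(uniformly in `θ`); consequently, for any `δ > 0` there is a constant `C_δ` such that
for `u₁, u₂` on the contours `[+∞ − iρ, 0−, +∞ + iρ]` with large real part,
`2 + 2 log(1/(1 − |u₁u₂/((1+u₁)(1+u₂))|)) ≤ C_δ |u₁|^δ |u₂|^δ`. -/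
theorem contour_log_estimate (ρ : ℝ) (hρ : 0 < ρ) :
    (∃ C₀ T : ℝ, ∀ t θ : ℝ, T ≤ t →
        |‖(t * Complex.exp (θ * Complex.I)) / (1 + t * Complex.exp (θ * Complex.I))‖ -
            (1 - Real.cos θ / t)| ≤ C₀ / t ^ 2) ∧
    ∀ δ > (0 : ℝ), ∃ Cδ T : ℝ, ∀ u₁ u₂ : ℂ,
      |u₁.im| = ρ → T ≤ u₁.re → |u₂.im| = ρ → T ≤ u₂.re →
      ‖u₁ * u₂ / ((1 + u₁) * (1 + u₂))‖ < 1 ∧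
      2 + 2 * Real.log (1 / (1 - ‖u₁ * u₂ / ((1 + u₁) * (1 + u₂))‖)) ≤
        Cδ * ‖u₁‖ ^ δ * ‖u₂‖ ^ δ :=
  contour_log_estimate_general ρ
end
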